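/- arXiv:1811.05160 — 3 statements merged into one kernel-verified Lean document; each statement's English description precedes it below -/
import Mathlib

section
/- In the setting of the forward-chaining chain S = W_0 ⊊ W_1 ⊊ ⋯ ⊊ W_t ⊇ S' associated with a round-minimal L-optimal CNF Φ for price_L(S,S'), with B_i a smallest member of 𝓑 contained in W_i for i = 0,…,t−1 and B_t := S', define i_0 = 0 and, for j > 0, let i_j be the smallest index with |B_{i_j}| ≤ |B_{i_{j−1}}|/2; let r−1 be the largest value for which B_{i_{r−1}} exists, and set B_{i_r} := S'. Then Φ^(2) := ⋀_{j=0}^{r−1} B_{i_j} → (B_{i_{j+1}} \ (S ∪ ⋃_{ℓ=1}^{j} B_{i_ℓ})) satisfies S' ⊆ F_{Φ^(2)}(S) and |Φ^(2)|_L ≤ 2 · |Φ^(1)|_L, where Φ^(1) := ⋀_{i=0}^{t−1} B_i → (B_{i+1} \ (S ∪ ⋃_{j=1}^{i} B_j)). -/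
open Finset

variable {V : Type*} [Fintype V] [DecidableEq V]

/-- A pure Horn CNF is a finite set of clauses `(B, v)`: body `B`, head `v`,
with `B` nonempty and `v ∉ B`. -/
def PureHorn (Φ : Finset (Finset V × V)) : Prop :=
  ∀ c ∈ Φ, c.1.Nonempty ∧ c.2 ∉ c.1

/-- A set `W` is closed under the clauses of `Φ`. -/
def HornClosed (Φ : Finset (Finset V × V)) (W : Set V) : Prop :=
  ∀ c ∈ Φ, ↑c.1 ⊆ W → c.2 ∈ W

/-- Forward-chaining closure `F_Φ(Z)`: the smallest set containing `Z`
that is closed under the clauses of `Φ`. -/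
def hornClosure (Φ : Finset (Finset V × V)) (Z : Set V) : Set V :=
  ⋂₀ {W : Set V | Z ⊆ W ∧ HornClosed Φ W}

/-- `Ψ_𝓑 = ⋀_{B ∈ 𝓑} B → (V \ B)`. -/
def keyCNF (𝓑 : Finset (Finset V)) : Finset (Finset V × V) :=
  𝓑.biUnion fun B => (Finset.univ \ B).image fun v => (B, v)

/-- `Φ` represents the key Horn function `h_𝓑`, i.e. `Φ` is a pure Horn CNF
equivalent to `Ψ_𝓑`. -/
def Represents (𝓑 : Finset (Finset V)) (Φ : Finset (Finset V × V)) : Prop :=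
  PureHorn Φ ∧ ∀ Z : Finset V, hornClosure Φ ↑Z = hornClosure (keyCNF 𝓑) ↑Z

/-- (B) number of (distinct) bodies. -/
def sizeB (Φ : Finset (Finset V × V)) : ℕ := (Φ.image Prod.fst).card
/-- (BA) body area `Σ_i |B_i|` over the distinct bodies. -/
def sizeBA (Φ : Finset (Finset V × V)) : ℕ := ∑ B ∈ Φ.image Prod.fst, B.card
/-- (C) number of clauses `Σ_i |H_i|`. -/
def sizeC (Φ : Finset (Finset V × V)) : ℕ := Φ.card
/-- (TA) total area `Σ_i (|B_i| + |H_i|)`. -/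
def sizeTA (Φ : Finset (Finset V × V)) : ℕ := sizeBA Φ + sizeC Φ
/-- (BC) bodies plus clauses `Σ_i (|H_i| + 1)`. -/
def sizeBC (Φ : Finset (Finset V × V)) : ℕ := sizeB Φ + sizeC Φ
/-- (L) number of literals `Σ_i (|B_i| + 1)·|H_i|`. -/
def sizeL (Φ : Finset (Finset V × V)) : ℕ := ∑ c ∈ Φ, (c.1.card + 1)

/-- `μ` is one of the six size measures. -/
def IsMeasure (μ : Finset (Finset V × V) → ℕ) : Prop :=
  μ = sizeB ∨ μ = sizeBA ∨ μ = sizeTA ∨ μ = sizeC ∨ μ = sizeBC ∨ μ = sizeL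

/-- `OPT_μ(𝓑)`: minimum `μ`-size of a CNF representing `h_𝓑`. -/
noncomputable def OPT (μ : Finset (Finset V × V) → ℕ) (𝓑 : Finset (Finset V)) : ℕ :=
  sInf {s : ℕ | ∃ Φ : Finset (Finset V × V), Represents 𝓑 Φ ∧ μ Φ = s}

/-- `price_μ(S,T)`: minimum `μ`-size of a pure Horn CNF with bodies in `𝓑`
whose forward chaining from `S` reaches all of `T`. -/
noncomputable def price (μ : Finset (Finset V × V) → ℕ) (𝓑 : Finset (Finset V))
    (S T : Finset V) : ℕ :=
  sInf {s : ℕ | ∃ Φ : Finset (Finset V × V),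
    PureHorn Φ ∧ (∀ c ∈ Φ, c.1 ∈ 𝓑) ∧ ↑T ⊆ hornClosure Φ ↑S ∧ μ Φ = s}

/-- One round of forward chaining. -/
def fcStep (Φ : Finset (Finset V × V)) (W : Finset V) : Finset V :=
  W ∪ (Φ.filter fun c => c.1 ⊆ W).image Prod.snd

/-- The forward-chaining chain `W_0 = S`, `W_{i+1} = fcStep Φ W_i`. -/
def fcChain (Φ : Finset (Finset V × V)) (S : Finset V) : ℕ → Finset V
  | 0 => S
  | i + 1 => fcStep Φ (fcChain Φ S i)

/-- The CNF `⋀_{i=0}^{t-1} Bs i → (Bs (i+1) \ (S ∪ ⋃_{j=1}^{i} Bs j))`. -/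
def chainCNF (S : Finset V) (Bs : ℕ → Finset V) (t : ℕ) :
    Finset (Finset V × V) :=
  (Finset.range t).biUnion fun i =>
    (Bs (i + 1) \ (S ∪ (Finset.Icc 1 i).biUnion Bs)).image fun v => (Bs i, v)

/-!
Since the first body lies in `S` and every `v ∈ B_{i_{j+1}} \ S` either occurs in an earlier
body or is a head of the clause group of `B_{i_j}`, forward chaining along `Φ^(2)` reaches each
`B_{i_j}` in turn and finally `S'`. For the size, a clause `B_{i_j} → v` of `Φ^(2)` is charged
to the clause `B_i → v` of `Φ^(1)` that produces `v`; it is unique because the head sets of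
`Φ^(1)` are pairwise disjoint, and `i < i_{j+1}` because `v ∈ B_{i_{j+1}}`. Minimality of
`i_{j+1}` then gives `|B_{i_j}| < 2 |B_i|`.
-/

set_option linter.unusedSectionVars false

lemma hornClosure_subset {Φ : Finset (Finset V × V)} {Z W : Set V}
    (hZ : Z ⊆ W) (hW : HornClosed Φ W) : hornClosure Φ Z ⊆ W :=
  Set.sInter_subset_of_mem ⟨hZ, hW⟩

lemma subset_hornClosure (Φ : Finset (Finset V × V)) (Z : Set V) :
    Z ⊆ hornClosure Φ Z :=
  fun _ hv _ hW => hW.1 hv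

lemma hornClosed_hornClosure (Φ : Finset (Finset V × V)) (Z : Set V) :
    HornClosed Φ (hornClosure Φ Z) :=
  fun c hc hsub _ hW => hW.2 c hc fun _ hx => hsub hx _ hW

lemma hornClosed_of_fcStep_eq {Φ : Finset (Finset V × V)} {W : Finset V}
    (h : fcStep Φ W = W) : HornClosed Φ ↑W := by
  intro c hc hsub
  rw [← h]
  exact mem_union_right _ (mem_image_of_mem _ (mem_filter.2 ⟨hc, fun _ hx => hsub hx⟩))

lemma hornClosure_subset_of_fcStep_eq {Φ : Finset (Finset V × V)} {W : Finset V}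
    (h : fcStep Φ W = W) : hornClosure Φ ↑W ⊆ ↑W :=
  hornClosure_subset subset_rfl (hornClosed_of_fcStep_eq h)

lemma sizeL_le_mul_of_forall_exists_snd_eq {Ψ Φ : Finset (Finset V × V)} {k : ℕ}
    (hΨ : ∀ c ∈ Ψ, ∀ c' ∈ Ψ, c.2 = c'.2 → c = c')
    (h : ∀ c ∈ Ψ, ∃ d ∈ Φ, d.2 = c.2 ∧ c.1.card + 1 ≤ k * (d.1.card + 1)) :
    sizeL Ψ ≤ k * sizeL Φ := by
  choose! g hgΦ hg2 hgle using h
  have hinj : Set.InjOn g Ψ := fun c hc c' hc' hcc' =>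
    hΨ c hc c' hc' (by rw [← hg2 c hc, ← hg2 c' hc', hcc'])
  calc sizeL Ψ ≤ ∑ c ∈ Ψ, k * ((g c).1.card + 1) := sum_le_sum hgle
    _ = ∑ d ∈ Ψ.image g, k * (d.1.card + 1) :=
      (sum_image (f := fun d => k * (d.1.card + 1)) hinj).symm
    _ ≤ ∑ d ∈ Φ, k * (d.1.card + 1) :=
      sum_le_sum_of_subset (image_subset_iff.2 hgΦ)
    _ = k * sizeL Φ := (mul_sum ..).symm

section chainCNF

variable {S : Finset V} {Bs : ℕ → Finset V}

/-- The head set `H_i` of the `i`-th body of `chainCNF S Bs t`. -/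
def chainHead (S : Finset V) (Bs : ℕ → Finset V) (i : ℕ) : Finset V :=
  Bs (i + 1) \ (S ∪ (Icc 1 i).biUnion Bs)

lemma mem_chainCNF {t : ℕ} {c : Finset V × V} :
    c ∈ chainCNF S Bs t ↔ ∃ i < t, c.1 = Bs i ∧ c.2 ∈ chainHead S Bs i := by
  simp only [chainCNF, chainHead, mem_biUnion, mem_range, mem_image]
  constructor
  · rintro ⟨i, hi, v, hv, rfl⟩
    exact ⟨i, hi, rfl, hv⟩
  · rintro ⟨i, hi, h1, h2⟩
    exact ⟨i, hi, c.2, h2, by rw [← h1]⟩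

lemma chainHead_eq_of_mem {i i' : ℕ} {v : V}
    (h : v ∈ chainHead S Bs i) (h' : v ∈ chainHead S Bs i') : i = i' := by
  wlog hlt : i < i' generalizing i i'
  · rcases (not_lt.1 hlt).eq_or_lt with heq | hgt
    · exact heq.symm
    · exact (this h' h hgt).symm
  simp only [chainHead, mem_sdiff, mem_union, mem_biUnion, mem_Icc] at h h'
  exact absurd (Or.inr ⟨i + 1, ⟨by omega, hlt⟩, h.1⟩) h'.2

lemma chainCNF_eq_of_snd_eq {t : ℕ} {c c' : Finset V × V} (hc : c ∈ chainCNF S Bs t)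
    (hc' : c' ∈ chainCNF S Bs t) (h : c.2 = c'.2) : c = c' := by
  obtain ⟨i, -, hc1, hi⟩ := mem_chainCNF.1 hc
  obtain ⟨i', -, hc1', hi'⟩ := mem_chainCNF.1 hc'
  rw [h] at hi
  exact Prod.ext (by rw [hc1, hc1', chainHead_eq_of_mem hi hi']) h

lemma subset_hornClosure_chainCNF {r j : ℕ} (h0 : Bs 0 ⊆ S) (hj : j ≤ r) :
    ↑(Bs j) ⊆ hornClosure (chainCNF S Bs r) ↑S := by
  induction j using Nat.strong_induction_on with
  | _ j ih =>
    intro v hv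
    rcases j with _ | j
    · exact subset_hornClosure _ _ (mem_coe.2 (h0 hv))
    by_cases hv' : v ∈ S ∪ (Icc 1 j).biUnion Bs
    · rcases mem_union.1 hv' with hvS | hvB
      · exact subset_hornClosure _ _ (mem_coe.2 hvS)
      · obtain ⟨l, hl, hvl⟩ := mem_biUnion.1 hvB
        rw [mem_Icc] at hl
        exact ih l (by omega) (by omega) hvl
    · exact hornClosed_hornClosure _ _ (Bs j, v)
        (mem_chainCNF.2 ⟨j, by omega, rfl, mem_sdiff.2 ⟨hv, hv'⟩⟩)
        (ih j (by omega) (by omega))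

/-- A vertex outside `S` enters the chain as a head at the round just before
its first occurrence in `Bs`. -/
lemma exists_mem_chainHead {k : ℕ} {v : V} (h0 : Bs 0 ⊆ S) (hv : v ∈ Bs k) (hvS : v ∉ S) :
    ∃ i < k, v ∈ chainHead S Bs i := by
  have hex : ∃ k, v ∈ Bs k := ⟨k, hv⟩
  obtain ⟨m, hm⟩ : ∃ m, Nat.find hex = m + 1 :=
    Nat.exists_eq_succ_of_ne_zero fun h => hvS (h0 (h ▸ Nat.find_spec hex))
  refine ⟨m, by have := Nat.find_min' hex hv; omega, ?_⟩
  simp only [chainHead, mem_sdiff, mem_union, mem_biUnion, mem_Icc, not_or, not_exists,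
    not_and]
  exact ⟨hm ▸ Nat.find_spec hex, hvS, fun l hl => Nat.find_min hex (by rw [hm]; omega)⟩

lemma sizeL_chainCNF_le_two_mul {Cs : ℕ → Finset V} {r t : ℕ} (h0 : Bs 0 ⊆ S)
    (hstep : ∀ j < r, ∃ k ≤ t, Cs (j + 1) = Bs k ∧ ∀ i < k, (Cs j).card < 2 * (Bs i).card) :
    sizeL (chainCNF S Cs r) ≤ 2 * sizeL (chainCNF S Bs t) := by
  refine sizeL_le_mul_of_forall_exists_snd_eq (fun c hc c' hc' => chainCNF_eq_of_snd_eq hc hc')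
    fun c hc => ?_
  obtain ⟨j, hj, hc1, hc2⟩ := mem_chainCNF.1 hc
  obtain ⟨k, hkt, hCk, hlt⟩ := hstep j hj
  simp only [chainHead, mem_sdiff, mem_union, not_or] at hc2
  obtain ⟨i, hik, hi⟩ := exists_mem_chainHead h0 (hCk ▸ hc2.1) hc2.2.1
  refine ⟨(Bs i, c.2), mem_chainCNF.2 ⟨i, by omega, rfl, hi⟩, rfl, ?_⟩
  have := hlt i hik
  dsimp only
  rw [hc1]
  omega

end chainCNF

theorem stmt13_general {V : Type*} [Fintype V] [DecidableEq V]
    (𝓑 : Finset (Finset V))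
    (S S' : Finset V)
    (Φ : Finset (Finset V × V)) (t : ℕ)
    (hSreach : ↑S' ⊆ hornClosure Φ ↑S)
    (hstab : fcChain Φ S t = fcChain Φ S (t + 1))
    (Bseq : ℕ → Finset V)
    (hBseq : ∀ i < t, Bseq i ∈ 𝓑 ∧ Bseq i ⊆ fcChain Φ S i ∧
      ∀ B' ∈ 𝓑, B' ⊆ fcChain Φ S i → (Bseq i).card ≤ B'.card)
    (hBt : Bseq t = S')
    (r : ℕ) (hr : 1 ≤ r) (idx : ℕ → ℕ) (hidx0 : idx 0 = 0)
    (hidx : ∀ j : ℕ, 1 ≤ j → j ≤ r - 1 →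
      idx j < t ∧ 2 * (Bseq (idx j)).card ≤ (Bseq (idx (j - 1))).card ∧
      ∀ i' < idx j, ¬ 2 * (Bseq i').card ≤ (Bseq (idx (j - 1))).card)
    (hrmax : ∀ i' < t, ¬ 2 * (Bseq i').card ≤ (Bseq (idx (r - 1))).card)
    (Bi : ℕ → Finset V)
    (hBi : ∀ j : ℕ, Bi j = if j = r then S' else Bseq (idx j))
    : ↑S' ⊆ hornClosure (chainCNF S Bi r) ↑S ∧
      sizeL (chainCNF S Bi r) ≤ 2 * sizeL (chainCNF S Bseq t) := by
  have hB0 : Bseq 0 ⊆ S := by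
    rcases Nat.eq_zero_or_pos t with rfl | ht
    · -- `t = 0`: `S` is already closed under `Φ`, so it contains `S' = Bseq 0`.
      rw [hBt]
      exact_mod_cast hSreach.trans (hornClosure_subset_of_fcStep_eq hstab.symm)
    · simpa [fcChain] using (hBseq 0 ht).2.1
  have hBi_lt : ∀ j < r, Bi j = Bseq (idx j) := fun j hj => by rw [hBi, if_neg (by omega)]
  have hstep : ∀ j < r, ∃ k ≤ t, Bi (j + 1) = Bseq k ∧
      ∀ i < k, (Bi j).card < 2 * (Bseq i).card := by
    intro j hj
    rw [hBi_lt j hj, hBi]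
    split_ifs with hjr
    · refine ⟨t, le_rfl, hBt.symm, fun i hi => ?_⟩
      have := hrmax i hi
      rw [show r - 1 = j by omega] at this
      omega
    · obtain ⟨hlt, -, hmin⟩ := hidx (j + 1) (by omega) (by omega)
      refine ⟨idx (j + 1), hlt.le, rfl, fun i hi => ?_⟩
      have := hmin i hi
      rw [Nat.add_sub_cancel] at this
      omega
  have hBi0 : Bi 0 ⊆ S := by rw [hBi_lt 0 hr, hidx0]; exact hB0
  refine ⟨?_, sizeL_chainCNF_le_two_mul hB0 hstep⟩
  have hreach := subset_hornClosure_chainCNF (r := r) hBi0 le_rfl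
  rwa [hBi, if_pos rfl] at hreach

/-- Proposition 4: with `i_0 = 0`, `i_j` the smallest index with
`|B_{i_j}| ≤ |B_{i_{j-1}}|/2`, `r-1` the largest value for which `B_{i_{r-1}}`
exists, and `B_{i_r} := S'`, the CNF
`Φ^(2) = ⋀_{j=0}^{r-1} B_{i_j} → (B_{i_{j+1}} \ (S ∪ ⋃_{ℓ=1}^{j} B_{i_ℓ}))`
satisfies `S' ⊆ F_{Φ^(2)}(S)` and `|Φ^(2)|_L ≤ 2·|Φ^(1)|_L`. -/
theorem stmt13 {V : Type*} [Fintype V] [DecidableEq V]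
    (𝓑 : Finset (Finset V))
    (hne : ∀ B ∈ 𝓑, B.Nonempty) (hproper : ∀ B ∈ 𝓑, B ≠ Finset.univ)
    (hsperner : ∀ B ∈ 𝓑, ∀ B' ∈ 𝓑, B ⊆ B' → B = B')
    (hcover : ∀ v : V, ∃ B ∈ 𝓑, v ∈ B)
    (hinter : ∀ v : V, ∃ B ∈ 𝓑, v ∉ B)
    (S S' : Finset V) (hS : ∃ B ∈ 𝓑, B ⊆ S)
    (Φ : Finset (Finset V × V)) (t : ℕ)
    (hPH : PureHorn Φ) (hbodies : ∀ c ∈ Φ, c.1 ∈ 𝓑)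
    (hSreach : ↑S' ⊆ hornClosure Φ ↑S)
    (hopt : sizeL Φ = price sizeL 𝓑 S S')
    (hstab : fcChain Φ S t = fcChain Φ S (t + 1))
    (htleast : ∀ j < t, fcChain Φ S j ≠ fcChain Φ S (j + 1))
    (hround : ∀ (Φ' : Finset (Finset V × V)) (t' : ℕ), PureHorn Φ' →
      (∀ c ∈ Φ', c.1 ∈ 𝓑) → ↑S' ⊆ hornClosure Φ' ↑S →
      sizeL Φ' = price sizeL 𝓑 S S' →
      fcChain Φ' S t' = fcChain Φ' S (t' + 1) → t ≤ t')
    (Bseq : ℕ → Finset V)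
    (hBseq : ∀ i < t, Bseq i ∈ 𝓑 ∧ Bseq i ⊆ fcChain Φ S i ∧
      ∀ B' ∈ 𝓑, B' ⊆ fcChain Φ S i → (Bseq i).card ≤ B'.card)
    (hBt : Bseq t = S')
    (r : ℕ) (hr : 1 ≤ r) (idx : ℕ → ℕ) (hidx0 : idx 0 = 0)
    (hidx : ∀ j : ℕ, 1 ≤ j → j ≤ r - 1 →
      idx j < t ∧ 2 * (Bseq (idx j)).card ≤ (Bseq (idx (j - 1))).card ∧
      ∀ i' < idx j, ¬ 2 * (Bseq i').card ≤ (Bseq (idx (j - 1))).card)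
    (hrmax : ∀ i' < t, ¬ 2 * (Bseq i').card ≤ (Bseq (idx (r - 1))).card)
    (Bi : ℕ → Finset V)
    (hBi : ∀ j : ℕ, Bi j = if j = r then S' else Bseq (idx j))
    : ↑S' ⊆ hornClosure (chainCNF S Bi r) ↑S ∧
      sizeL (chainCNF S Bi r) ≤ 2 * sizeL (chainCNF S Bseq t) :=
  stmt13_general 𝓑 S S' Φ t hSreach hstab Bseq hBseq hBt r hr idx hidx0 hidx hrmax Bi hBi
end

section
/- In the setting of the forward-chaining chain S = W_0 ⊊ W_1 ⊊ ⋯ ⊊ W_t ⊇ S' associated with a round-minimal L-optimal CNF Φ for price_L(S,S'), with B_i a smallest member of 𝓑 contained in W_i for i = 0,…,t−1, B_t := S', indices i_0 = 0, i_j the smallest index with |B_{i_j}| ≤ |B_{i_{j−1}}|/2 for j > 0, r−1 the largest value for which B_{i_{r−1}} exists, and B_{i_r} := S', the CNFs Φ^(2) := ⋀_{j=0}^{r−1} B_{i_j} → (B_{i_{j+1}} \ (S ∪ ⋃_{ℓ=1}^{j} B_{i_ℓ})) and Φ^(3) := ⋀_{j=0}^{r−1} B_{i_j} → (B_{i_{j+1}}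 \ (S ∪ B_{i_j})) satisfy |Φ^(3)|_L ≤ (27/17) · |Φ^(2)|_L. -/
open Finset

variable {V : Type*} [Fintype V] [DecidableEq V]

/-- The CNF `⋀_{j=0}^{r-1} Bs j → (Bs (j+1) \ (S ∪ Bs j))`. -/
def phi3CNF (S : Finset V) (Bs : ℕ → Finset V) (r : ℕ) :
    Finset (Finset V × V) :=
  (Finset.range r).biUnion fun j =>
    (Bs (j + 1) \ (S ∪ Bs j)).image fun v => (Bs j, v)


/-!
Write `H^(2)_j`, `H^(3)_j` for the heads of body `B_{i_j}` in `Φ^(2)`, `Φ^(3)`. The `H^(2)_j`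
are pairwise disjoint, so `|Φ^(2)|_L = Σ_j (|B_{i_j}| + 1)·|H^(2)_j|`, while `|Φ^(3)|_L` is at
most the analogous sum. An element `v ∈ H^(3)_j \ H^(2)_j` already lies in some `B_{i_ℓ}` with
`1 ≤ ℓ < j`; charge every such occurrence to the unique step `m` with `v ∈ H^(2)_m`, so that
all steps charged to `m` are `≥ m + 2`. Since `|B_{i_j}|` at least halves from step to step,
the sizes over steps `m + 2, …, r - 1` sum to less than `2|B_{i_{m+2}}| ≤ |B_{i_m}|/2`, and
there are at most `log₂|B_{i_{m+2}}| + 1` such steps; together their weights are at most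
`(10/17)(|B_{i_m}| + 1)`. Hence `|Φ^(3)|_L ≤ (1 + 10/17)·|Φ^(2)|_L`.
-/

namespace Finset

theorem sum_biUnion_le_sum_sum {ι α M : Type*} [DecidableEq α] [AddCommMonoid M]
    [PartialOrder M] [IsOrderedAddMonoid M] [CanonicallyOrderedAdd M]
    (s : Finset ι) (t : ι → Finset α) (f : α → M) :
    ∑ x ∈ s.biUnion t, f x ≤ ∑ i ∈ s, ∑ x ∈ t i, f x := by
  classical
  induction s using Finset.induction_on with
  | empty => simp
  | insert i s hi ih =>
    rw [biUnion_insert, sum_insert hi]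
    calc ∑ x ∈ t i ∪ s.biUnion t, f x
        ≤ ∑ x ∈ t i ∪ s.biUnion t, f x + ∑ x ∈ t i ∩ s.biUnion t, f x := le_self_add
      _ = ∑ x ∈ t i, f x + ∑ x ∈ s.biUnion t, f x := sum_union_inter
      _ ≤ ∑ x ∈ t i, f x + ∑ j ∈ s, ∑ x ∈ t j, f x := add_le_add_right ih _

theorem sum_card_smul_eq_sum_sum_filter {ι α M : Type*} [Fintype α] [DecidableEq α]
    [AddCommMonoid M] (s : Finset ι) (X : ι → Finset α) (w : ι → M) :
    ∑ i ∈ s, #(X i) • w i = ∑ a, ∑ i ∈ s with a ∈ X i, w i := by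
  simp_rw [sum_filter]
  rw [sum_comm]
  refine sum_congr rfl fun i _ => ?_
  rw [sum_ite_mem, univ_inter, sum_const]

end Finset

open Finset

section Halving

variable {a : ℕ → ℕ} {m n s : ℕ}

theorem two_pow_mul_le_of_halving (h : ∀ j, s ≤ j → j < n → 2 * a (j + 1) ≤ a j)
    (hsn : s ≤ n) : 2 ^ (n - s) * a n ≤ a s := by
  induction n, hsn using Nat.le_induction with
  | base => simp
  | succ n hsn ih =>
    calc 2 ^ (n + 1 - s) * a (n + 1) = 2 ^ (n - s) * (2 * a (n + 1)) := by
          rw [Nat.sub_add_comm hsn, pow_succ, mul_assoc]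
      _ ≤ 2 ^ (n - s) * a n := Nat.mul_le_mul_left _ (h n hsn n.lt_succ_self)
      _ ≤ a s := ih fun j hj hjn => h j hj (by omega)

theorem sum_Icc_add_le_of_halving (h : ∀ j, s ≤ j → j < n → 2 * a (j + 1) ≤ a j)
    (hsn : s ≤ n) : ∑ j ∈ Icc s n, a j + a n ≤ 2 * a s := by
  induction n, hsn using Nat.le_induction with
  | base =>
    rw [Icc_self, sum_singleton]
    omega
  | succ n hsn ih =>
    rw [sum_Icc_succ_top (by omega)]
    have hstep := h n hsn n.lt_succ_self
    have hprev := ih fun j hj hjn => h j hj (by omega)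
    omega

theorem seventeen_mul_succ_le (k : ℕ) : 17 * (k + 1) ≤ 6 * 2 ^ k + 27 := by
  induction k with
  | zero => norm_num
  | succ k ih =>
    rcases lt_or_ge k 2 with hk | hk
    · interval_cases k <;> norm_num
    · have : 2 ^ 2 ≤ 2 ^ k := Nat.pow_le_pow_right two_pos hk
      rw [pow_succ]
      omega

theorem seventeen_mul_sum_Icc_le_of_halving (h : ∀ j, m ≤ j → j < n → 2 * a (j + 1) ≤ a j)
    (hmn : m + 2 ≤ n) (hn : 1 ≤ a n) :
    17 * ∑ j ∈ Icc (m + 2) n, (a j + 1) ≤ 10 * (a m + 1) := by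
  have htail : ∀ j, m + 2 ≤ j → j < n → 2 * a (j + 1) ≤ a j := fun j hj => h j (by omega)
  have hsum := sum_Icc_add_le_of_halving htail hmn
  have hlen : 2 ^ (n - (m + 2)) ≤ a (m + 2) :=
    (Nat.le_mul_of_pos_right _ hn).trans (two_pow_mul_le_of_halving htail hmn)
  have hcount := seventeen_mul_succ_le (n - (m + 2))
  have h₀ := h m le_rfl (by omega)
  have h₁ : 2 * a (m + 2) ≤ a (m + 1) := h (m + 1) (by omega) (by omega)
  rw [sum_add_distrib, sum_const, Nat.card_Icc, smul_eq_mul, mul_one]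
  omega

end Halving

section Charging

variable {α : Type*} [DecidableEq α] (S : Finset α) (Bs : ℕ → Finset α)

def chainHeads (j : ℕ) : Finset α :=
  Bs (j + 1) \ (S ∪ (Icc 1 j).biUnion Bs)

def phi3Heads (j : ℕ) : Finset α :=
  Bs (j + 1) \ (S ∪ Bs j)

variable {S Bs} in
theorem mem_chainHeads {v : α} {j : ℕ} :
    v ∈ chainHeads S Bs j ↔ v ∈ Bs (j + 1) ∧ v ∉ S ∧ ∀ ℓ, 1 ≤ ℓ → ℓ ≤ j → v ∉ Bs ℓ := by
  simp [chainHeads, and_assoc]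

theorem disjoint_chainHeads {i j : ℕ} (hij : i ≠ j) :
    Disjoint (chainHeads S Bs i) (chainHeads S Bs j) := by
  wlog h : i < j generalizing i j
  · exact (this hij.symm (by omega)).symm
  exact disjoint_left.2 fun v hi hj =>
    (mem_chainHeads.1 hj).2.2 (i + 1) (by omega) (by omega) (mem_chainHeads.1 hi).1

theorem sizeL_image_prodMk (B H : Finset α) :
    sizeL (H.image fun v => (B, v)) = #H * (#B + 1) := by
  rw [sizeL, sum_image fun _ _ _ _ h => (Prod.mk.inj h).2]
  exact sum_const (#B + 1)

theorem sizeL_chainCNF (r : ℕ) :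
    sizeL (chainCNF S Bs r) = ∑ j ∈ range r, #(chainHeads S Bs j) * (#(Bs j) + 1) := by
  rw [sizeL, chainCNF, sum_biUnion]
  · exact sum_congr rfl fun j _ => sizeL_image_prodMk _ _
  · intro i _ j _ hij
    simp only [Function.onFun, disjoint_left, mem_image]
    rintro _ ⟨v, hv, rfl⟩ ⟨w, hw, hwv⟩
    obtain rfl : w = v := congrArg Prod.snd hwv
    exact disjoint_left.1 (disjoint_chainHeads S Bs hij) hv hw

theorem sizeL_phi3CNF_le (r : ℕ) :
    sizeL (phi3CNF S Bs r) ≤ ∑ j ∈ range r, #(phi3Heads S Bs j) * (#(Bs j) + 1) :=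
  (sum_biUnion_le_sum_sum _ _ _).trans_eq (sum_congr rfl fun _ _ => sizeL_image_prodMk _ _)

variable {S Bs}

theorem exists_lt_mem_of_mem_phi3Heads_sdiff {v : α} {j : ℕ}
    (hv : v ∈ phi3Heads S Bs j \ chainHeads S Bs j) :
    v ∉ S ∧ ∃ ℓ, 1 ≤ ℓ ∧ ℓ < j ∧ v ∈ Bs ℓ := by
  simp only [phi3Heads, mem_sdiff, mem_union, not_or, mem_chainHeads, not_and, not_forall,
    not_not] at hv
  obtain ⟨⟨hvB, hvS, hvj⟩, hold⟩ := hv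
  obtain ⟨ℓ, hℓ1, hℓj, hvℓ⟩ := hold hvB hvS
  exact ⟨hvS, ℓ, hℓ1, lt_of_le_of_ne hℓj (by rintro rfl; exact hvj hvℓ), hvℓ⟩

theorem exists_mem_chainHeads {v : α} {ℓ : ℕ} (hvS : v ∉ S) (hℓ : 1 ≤ ℓ) (hvℓ : v ∈ Bs ℓ) :
    ∃ m, v ∈ chainHeads S Bs m ∧ ∀ ℓ', 1 ≤ ℓ' → v ∈ Bs ℓ' → m < ℓ' := by
  have hex : ∃ ℓ, 1 ≤ ℓ ∧ v ∈ Bs ℓ := ⟨ℓ, hℓ, hvℓ⟩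
  obtain ⟨hL1, hvL⟩ := Nat.find_spec hex
  refine ⟨Nat.find hex - 1, mem_chainHeads.2 ⟨?_, hvS, fun ℓ' h1 h2 hvℓ' => ?_⟩,
    fun ℓ' h1 hvℓ' => ?_⟩
  · rwa [Nat.sub_add_cancel hL1]
  · exact Nat.find_min hex (by omega) ⟨h1, hvℓ'⟩
  · have := Nat.find_min' hex ⟨h1, hvℓ'⟩
    omega

theorem seventeen_mul_sum_filter_sdiff_le (r : ℕ)
    (hhalf : ∀ j, j + 1 < r → 2 * #(Bs (j + 1)) ≤ #(Bs j))
    (hne : ∀ j, 1 ≤ j → j < r → (Bs j).Nonempty) (v : α) :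
    17 * ∑ j ∈ range r with v ∈ phi3Heads S Bs j \ chainHeads S Bs j, (#(Bs j) + 1)
      ≤ 10 * ∑ j ∈ range r with v ∈ chainHeads S Bs j, (#(Bs j) + 1) := by
  set J := {j ∈ range r | v ∈ phi3Heads S Bs j \ chainHeads S Bs j}
  obtain hJ | ⟨j₀, hj₀⟩ := J.eq_empty_or_nonempty
  · simp [hJ]
  obtain ⟨hvS, ℓ, hℓ1, -, hvℓ⟩ := exists_lt_mem_of_mem_phi3Heads_sdiff (mem_filter.1 hj₀).2
  obtain ⟨m, hvm, hfirst⟩ := exists_mem_chainHeads hvS hℓ1 hvℓ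
  have hJ : J ⊆ Icc (m + 2) (r - 1) := fun j hj => by
    obtain ⟨hjr, hvj⟩ := mem_filter.1 hj
    obtain ⟨-, ℓ', hℓ'1, hℓ'j, hvℓ'⟩ := exists_lt_mem_of_mem_phi3Heads_sdiff hvj
    have := hfirst ℓ' hℓ'1 hvℓ'
    rw [mem_range] at hjr
    exact mem_Icc.2 ⟨by omega, by omega⟩
  have hmr : m + 2 ≤ r - 1 := by
    have := mem_Icc.1 (hJ hj₀)
    omega
  calc 17 * ∑ j ∈ J, (#(Bs j) + 1)
      ≤ 17 * ∑ j ∈ Icc (m + 2) (r - 1), (#(Bs j) + 1) := by gcongr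
    _ ≤ 10 * (#(Bs m) + 1) :=
        seventeen_mul_sum_Icc_le_of_halving (a := fun j => #(Bs j))
          (fun j _ hj => hhalf j (by omega)) hmr (hne _ (by omega) (by omega)).card_pos
    _ ≤ 10 * ∑ j ∈ range r with v ∈ chainHeads S Bs j, (#(Bs j) + 1) := by
        gcongr
        exact single_le_sum (f := fun j => #(Bs j) + 1) (fun _ _ => Nat.zero_le _)
          (mem_filter.2 ⟨mem_range.2 (by omega), hvm⟩)

theorem seventeen_mul_sizeL_phi3CNF_le [Fintype α] (r : ℕ)
    (hhalf : ∀ j, j + 1 < r → 2 * #(Bs (j + 1)) ≤ #(Bs j))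
    (hne : ∀ j, 1 ≤ j → j < r → (Bs j).Nonempty) :
    17 * sizeL (phi3CNF S Bs r) ≤ 27 * sizeL (chainCNF S Bs r) := by
  rw [sizeL_chainCNF]
  have hle := sizeL_phi3CNF_le S Bs r
  have hsplit : ∑ j ∈ range r, #(phi3Heads S Bs j) * (#(Bs j) + 1) ≤
      ∑ j ∈ range r, #(phi3Heads S Bs j \ chainHeads S Bs j) * (#(Bs j) + 1) +
        ∑ j ∈ range r, #(chainHeads S Bs j) * (#(Bs j) + 1) := by
    rw [← sum_add_distrib]
    gcongr with j
    rw [← add_mul]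
    gcongr
    exact card_le_card_sdiff_add_card
  have hcharge : 17 * ∑ j ∈ range r, #(phi3Heads S Bs j \ chainHeads S Bs j) * (#(Bs j) + 1) ≤
      10 * ∑ j ∈ range r, #(chainHeads S Bs j) * (#(Bs j) + 1) := by
    simp only [← smul_eq_mul (a := #_), sum_card_smul_eq_sum_sum_filter]
    rw [mul_sum, mul_sum]
    exact sum_le_sum fun v _ => seventeen_mul_sum_filter_sdiff_le r hhalf hne v
  omega

end Charging

theorem stmt14_general {V : Type*} [Fintype V] [DecidableEq V]
    (𝓑 : Finset (Finset V))
    (hne : ∀ B ∈ 𝓑, B.Nonempty)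
    (S S' : Finset V)
    (Φ : Finset (Finset V × V)) (t : ℕ)
    (Bseq : ℕ → Finset V)
    (hBseq : ∀ i < t, Bseq i ∈ 𝓑 ∧ Bseq i ⊆ fcChain Φ S i ∧
      ∀ B' ∈ 𝓑, B' ⊆ fcChain Φ S i → (Bseq i).card ≤ B'.card)
    (r : ℕ) (idx : ℕ → ℕ)
    (hidx : ∀ j : ℕ, 1 ≤ j → j ≤ r - 1 →
      idx j < t ∧ 2 * (Bseq (idx j)).card ≤ (Bseq (idx (j - 1))).card ∧
      ∀ i' < idx j, ¬ 2 * (Bseq i').card ≤ (Bseq (idx (j - 1))).card)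
    (Bi : ℕ → Finset V)
    (hBi : ∀ j : ℕ, Bi j = if j = r then S' else Bseq (idx j))
    : (sizeL (phi3CNF S Bi r) : ℚ) ≤
        (27 / 17 : ℚ) * (sizeL (chainCNF S Bi r) : ℚ) := by
  have hhalf : ∀ j, j + 1 < r → 2 * #(Bi (j + 1)) ≤ #(Bi j) := by
    intro j hj
    have := (hidx (j + 1) (by omega) (by omega)).2.1
    rwa [hBi, hBi, if_neg (by omega), if_neg (by omega)]
  have hBi_ne : ∀ j, 1 ≤ j → j < r → (Bi j).Nonempty := by
    intro j h1 hj
    rw [hBi, if_neg hj.ne]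
    exact hne _ (hBseq _ (hidx j h1 (by omega)).1).1
  have key : (17 : ℚ) * sizeL (phi3CNF S Bi r) ≤ 27 * sizeL (chainCNF S Bi r) := by
    exact_mod_cast seventeen_mul_sizeL_phi3CNF_le r hhalf hBi_ne
  linarith

/-- Proposition 5: the CNFs
`Φ^(2) = ⋀_{j=0}^{r-1} B_{i_j} → (B_{i_{j+1}} \ (S ∪ ⋃_{ℓ=1}^{j} B_{i_ℓ}))`
and `Φ^(3) = ⋀_{j=0}^{r-1} B_{i_j} → (B_{i_{j+1}} \ (S ∪ B_{i_j}))`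
satisfy `|Φ^(3)|_L ≤ (27/17)·|Φ^(2)|_L`. -/
theorem stmt14 {V : Type*} [Fintype V] [DecidableEq V]
    (𝓑 : Finset (Finset V))
    (hne : ∀ B ∈ 𝓑, B.Nonempty) (hproper : ∀ B ∈ 𝓑, B ≠ Finset.univ)
    (hsperner : ∀ B ∈ 𝓑, ∀ B' ∈ 𝓑, B ⊆ B' → B = B')
    (hcover : ∀ v : V, ∃ B ∈ 𝓑, v ∈ B)
    (hinter : ∀ v : V, ∃ B ∈ 𝓑, v ∉ B)
    (S S' : Finset V) (hS : ∃ B ∈ 𝓑, B ⊆ S)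
    (Φ : Finset (Finset V × V)) (t : ℕ)
    (hPH : PureHorn Φ) (hbodies : ∀ c ∈ Φ, c.1 ∈ 𝓑)
    (hSreach : ↑S' ⊆ hornClosure Φ ↑S)
    (hopt : sizeL Φ = price sizeL 𝓑 S S')
    (hstab : fcChain Φ S t = fcChain Φ S (t + 1))
    (htleast : ∀ j < t, fcChain Φ S j ≠ fcChain Φ S (j + 1))
    (hround : ∀ (Φ' : Finset (Finset V × V)) (t' : ℕ), PureHorn Φ' →
      (∀ c ∈ Φ', c.1 ∈ 𝓑) → ↑S' ⊆ hornClosure Φ' ↑S →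
      sizeL Φ' = price sizeL 𝓑 S S' →
      fcChain Φ' S t' = fcChain Φ' S (t' + 1) → t ≤ t')
    (Bseq : ℕ → Finset V)
    (hBseq : ∀ i < t, Bseq i ∈ 𝓑 ∧ Bseq i ⊆ fcChain Φ S i ∧
      ∀ B' ∈ 𝓑, B' ⊆ fcChain Φ S i → (Bseq i).card ≤ B'.card)
    (hBt : Bseq t = S')
    (r : ℕ) (hr : 1 ≤ r) (idx : ℕ → ℕ) (hidx0 : idx 0 = 0)
    (hidx : ∀ j : ℕ, 1 ≤ j → j ≤ r - 1 →
      idx j < t ∧ 2 * (Bseq (idx j)).card ≤ (Bseq (idx (j - 1))).card ∧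
      ∀ i' < idx j, ¬ 2 * (Bseq i').card ≤ (Bseq (idx (j - 1))).card)
    (hrmax : ∀ i' < t, ¬ 2 * (Bseq i').card ≤ (Bseq (idx (r - 1))).card)
    (Bi : ℕ → Finset V)
    (hBi : ∀ j : ℕ, Bi j = if j = r then S' else Bseq (idx j))
    : (sizeL (phi3CNF S Bi r) : ℚ) ≤
        (27 / 17 : ℚ) * (sizeL (chainCNF S Bi r) : ℚ) :=
  stmt14_general 𝓑 hne S S' Φ t Bseq hBseq r idx hidx Bi hBi
end

section
/- Let A, B, C be finite sets and set E = B \ (A ∪ C), F = B ∩ (C \ A), G = C \ (A ∪ B), and a = |A|, b = |B|, c = |C|, e = |E|, f = |F|, g = |G|. Then the following three statements are equivalent (with all arithmetic over the integers): (a) cost_L(A,B,C) < cost_L(A,C); (b) (a − b)·g > (a + 1)·e; (c) a·(g − e) > e + b·g. -/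
open Finset

/-- `cost_L(A,B,C) = (|A|+1)·|B\A| + (|B|+1)·|C\(A∪B)|`. -/
def costL3 {α : Type*} [DecidableEq α] (A B C : Finset α) : ℕ :=
  (A.card + 1) * (B \ A).card + (B.card + 1) * (C \ (A ∪ B)).card

/-- `cost_L(A,C) = (|A|+1)·|C\A|`. -/
def costL2 {α : Type*} [DecidableEq α] (A C : Finset α) : ℕ :=
  (A.card + 1) * (C \ A).card

/-! Splitting `B \ A = E ⊔ F` and `C \ A = F ⊔ G`, the `F`-terms cancel and
`cost_L(A,C) - cost_L(A,B,C) = (a - b)·g - (a + 1)·e`; statement (c) is (b) with the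
products expanded. -/

section
variable {α : Type*} [DecidableEq α] (A B C : Finset α)

lemma card_sdiff_eq_card_sdiff_union_add_card_inter_sdiff :
    #(B \ A) = #(B \ (A ∪ C)) + #(B ∩ (C \ A)) := by
  rw [← card_sdiff_add_card_inter (B \ A) C, sdiff_sdiff_left]
  congr 2
  ext x
  simp only [mem_inter, mem_sdiff]
  tauto

lemma card_sdiff_eq_card_inter_sdiff_add_card_sdiff_union :
    #(C \ A) = #(B ∩ (C \ A)) + #(C \ (A ∪ B)) := by
  rw [← card_inter_add_card_sdiff (C \ A) B, sdiff_sdiff_left, inter_comm]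
  rfl

lemma costL2_sub_costL3 :
    (costL2 A C : ℤ) - costL3 A B C =
      (#A - #B) * #(C \ (A ∪ B)) - (#A + 1) * #(B \ (A ∪ C)) := by
  rw [costL2, costL3, card_sdiff_eq_card_sdiff_union_add_card_inter_sdiff A B C,
    card_sdiff_eq_card_inter_sdiff_add_card_sdiff_union A B C]
  push_cast
  ring

end

theorem stmt18_general {α : Type*} [DecidableEq α] (A B C : Finset α)
    (a b e g : ℤ)
    (ha : a = A.card) (hb : b = B.card)
    (he : e = (B \ (A ∪ C)).card)
    (hg : g = (C \ (A ∪ B)).card) :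
    ((costL3 A B C < costL2 A C) ↔ (a - b) * g > (a + 1) * e) ∧
    (((a - b) * g > (a + 1) * e) ↔ a * (g - e) > e + b * g) := by
  have hgap := costL2_sub_costL3 A B C
  rw [← ha, ← hb, ← he, ← hg] at hgap
  constructor
  · rw [← Nat.cast_lt (α := ℤ), gt_iff_lt, ← sub_pos, hgap, sub_pos]
  · constructor <;> intro h <;> linarith

/-- Lemma on three sets: with `e = |B\(A∪C)|`, `f = |B∩(C\A)|`,
`g = |C\(A∪B)|`, the following are equivalent:
(a) `cost_L(A,B,C) < cost_L(A,C)`; (b) `(a-b)·g > (a+1)·e`;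
(c) `a·(g-e) > e + b·g` (integer arithmetic). -/
theorem stmt18 {α : Type*} [DecidableEq α] (A B C : Finset α)
    (a b c e f g : ℤ)
    (ha : a = A.card) (hb : b = B.card) (hc : c = C.card)
    (he : e = (B \ (A ∪ C)).card) (hf : f = (B ∩ (C \ A)).card)
    (hg : g = (C \ (A ∪ B)).card) :
    ((costL3 A B C < costL2 A C) ↔ (a - b) * g > (a + 1) * e) ∧
    (((a - b) * g > (a + 1) * e) ↔ a * (g - e) > e + b * g) :=
  stmt18_general A B C a b e g ha hb he hg
end
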